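/- Let R be a binary relation on ℕ whose convolution language is regular. Then the convolution language of the reflexive-transitive closure R* of R (the smallest reflexive and transitive relation containing R) is also regular. -/

import Mathlib

/-- The convolution word of the pair `(m, n)`, over the three-letter alphabet `Fin 3`
(`0` plays the role of `s`, `1` of `l`, `2` of `r`). -/
def convWord (m n : ℕ) : List (Fin 3) :=
  List.replicate (min m n) 0 ++ List.replicate (m - min m n) 1 ++
    List.replicate (n - min m n) 2

/-- The convolution language of a binary relation on `ℕ`. -/
def convLang (R : ℕ → ℕ → Prop) : Language (Fin 3) :=
  {w | ∃ m n, R m n ∧ w = convWord m n}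

/-- A binary relation on `ℕ` is regular if its convolution language is regular. -/
def RegularRel (R : ℕ → ℕ → Prop) : Prop :=
  (convLang R).IsRegular

/-!
A relation `R` on `ℕ` has a regular convolution language exactly when it is ultimately periodic:
for a threshold `T` and a period `P > 0`, `R x y` is unchanged by adding `P` to both arguments
once both are at least `T`, and by adding `P` to the larger argument once the gap is at least `T`.
One direction is the pigeonhole principle for the iterates of the transition maps of a DFA; for
the other, a DFA only needs to remember its two counters up to this equivalence.

It remains to show that `R*` is ultimately periodic, with period `Q = ((P + 1) T)!`. The key is
pumping: if `k →* v` with `v` far above `k`, then `k →* v + Q`. After its last visit below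
`c = max k T + 1`, the path either makes a step up by at least `T`, which can be lengthened by `Q`
while the rest of the path is shifted up by `Q`; or it climbs in steps shorter than `T`, so it
visits each window `[c + i T, c + (i + 1) T)` with `i ≤ P`, two of these visits are congruent
mod `P`, and the segment between them, of length at most `(P + 1) T`, can be repeated, shifted,
until it has climbed `Q`. Pumping down is pumping up for the reversed relation. Being closed under
`+ Q` far out, reachability from and to each fixed point is eventually `Q`-periodic; diagonal
periodicity follows by cutting a path at a visit below `T + Q`, or shifting it if there is none.
-/

open Filter Relation
open scoped Nat

section Periodicity

variable {p : ℕ → Prop} {T P n n' : ℕ}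

theorem iff_add_mul_of_iff_add (h : ∀ n, T ≤ n → (p n ↔ p (n + P))) (hn : T ≤ n)
    (m : ℕ) : p n ↔ p (n + P * m) := by
  induction m with
  | zero => simp
  | succ m ih => rw [ih, h _ (by omega), mul_add_one, add_assoc]

theorem iff_of_modEq_of_iff_add (h : ∀ n, T ≤ n → (p n ↔ p (n + P))) (hn : T ≤ n)
    (hn' : T ≤ n') (hmod : n ≡ n' [MOD P]) : p n ↔ p n' := by
  wlog hle : n ≤ n' generalizing n n'
  · exact (this hn' hn hmod.symm (by omega)).symm
  obtain ⟨m, hm⟩ := (Nat.modEq_iff_dvd' hle).1 hmod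
  rw [iff_add_mul_of_iff_add h hn m, ← hm, Nat.add_sub_cancel' hle]

theorem eventually_iff_add_of_eventually_imp (hP : 0 < P)
    (h : ∀ᶠ v in atTop, p v → p (v + P)) : ∀ᶠ v in atTop, p v ↔ p (v + P) := by
  obtain ⟨N, hN⟩ := eventually_atTop.1 h
  have hres : ∀ r : Fin P, ∀ᶠ v in atTop, v % P = r → (p v ↔ p (v + P)) := by
    intro r
    by_cases hr : ∃ m, N ≤ m ∧ m % P = r ∧ p m
    · obtain ⟨m, hNm, hmr, hpm⟩ := hr
      have hclosed : ∀ v, m ≤ v → v % P = r → p v := by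
        intro v hmv hvr
        obtain ⟨j, hj⟩ := (Nat.modEq_iff_dvd' hmv).1 (hmr.trans hvr.symm)
        rw [← Nat.add_sub_cancel' hmv, hj]
        clear hj
        induction j with
        | zero => simpa
        | succ j ih => rw [mul_add_one, ← add_assoc]; exact hN _ (by omega) ih
      filter_upwards [eventually_ge_atTop m] with v hmv hvr
      exact iff_of_true (hclosed v hmv hvr) (hclosed (v + P) (by omega) (by simpa using hvr))
    · push Not at hr
      filter_upwards [eventually_ge_atTop N] with v hNv hvr
      exact iff_of_false (hr v hNv hvr) (hr (v + P) (by omega) (by simpa using hvr))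
  filter_upwards [eventually_all.2 hres] with v hv
  exact hv ⟨v % P, Nat.mod_lt v hP⟩ rfl

end Periodicity

structure IsUltimatelyPeriodic (R : ℕ → ℕ → Prop) (T P : ℕ) : Prop where
  diag : ∀ x y, T ≤ x → T ≤ y → (R x y ↔ R (x + P) (y + P))
  up : ∀ k d, T ≤ d → (R k (k + d) ↔ R k (k + d + P))
  down : ∀ k d, T ≤ d → (R (k + d) k ↔ R (k + d + P) k)

namespace IsUltimatelyPeriodic

variable {R : ℕ → ℕ → Prop} {T P Q : ℕ}

theorem swap (hR : IsUltimatelyPeriodic R T P) : IsUltimatelyPeriodic (Function.swap R) T P :=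
  ⟨fun x y hx hy => hR.diag y x hy hx, hR.down, hR.up⟩

theorem of_dvd (hR : IsUltimatelyPeriodic R T P) (hPQ : P ∣ Q) : IsUltimatelyPeriodic R T Q := by
  obtain ⟨m, rfl⟩ := hPQ
  refine ⟨fun x y hx hy => ?_, fun k d hd => ?_, fun k d hd => ?_⟩
  · simpa using iff_add_mul_of_iff_add (p := fun j => R (x + j) (y + j)) (T := 0)
      (fun j _ => by simpa [add_assoc] using hR.diag (x + j) (y + j) (by omega) (by omega))
      le_rfl m
  · simpa [add_assoc] using iff_add_mul_of_iff_add (p := fun d => R k (k + d))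
      (fun d hd => by simpa [add_assoc] using hR.up k d hd) hd m
  · simpa [add_assoc] using iff_add_mul_of_iff_add (p := fun d => R (k + d) k)
      (fun d hd => by simpa [add_assoc] using hR.down k d hd) hd m

end IsUltimatelyPeriodic

theorem convWord_add_right (k d : ℕ) :
    convWord k (k + d) = List.replicate k 0 ++ List.replicate d 2 := by
  simp [convWord]

theorem convWord_add_left (k d : ℕ) :
    convWord (k + d) k = List.replicate k 0 ++ List.replicate d 1 := by
  simp [convWord]

theorem convWord_inj {m n m' n' : ℕ} : convWord m n = convWord m' n' ↔ m = m' ∧ n = n' := by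
  refine ⟨fun h => ?_, fun ⟨hm, hn⟩ => hm ▸ hn ▸ rfl⟩
  have h0 := congrArg (List.count 0) h
  have h1 := congrArg (List.count 1) h
  have h2 := congrArg (List.count 2) h
  simp [convWord, List.count_replicate] at h0 h1 h2
  omega

theorem convWord_mem_convLang {R : ℕ → ℕ → Prop} {m n : ℕ} :
    convWord m n ∈ convLang R ↔ R m n := by
  refine ⟨fun ⟨_, _, hR, h⟩ => ?_, fun h => ⟨m, n, h, rfl⟩⟩
  obtain ⟨rfl, rfl⟩ := convWord_inj.1 h
  exact hR

theorem Function.exists_iterate_add_eq {ι X : Type*} [Finite ι] [Finite X] (g : ι → X → X) :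
    ∃ N p, 0 < p ∧ ∀ i n, N ≤ n → (g i)^[n + p] = (g i)^[n] := by
  obtain ⟨m, n, hmn, h⟩ := Finite.exists_ne_map_eq_of_infinite fun n i => (g i)^[n]
  wlog hlt : m < n generalizing m n
  · exact this n m hmn.symm h.symm (by omega)
  refine ⟨m, n - m, by omega, fun i k hk => ?_⟩
  calc (g i)^[k + (n - m)] = (g i)^[k - m] ∘ (g i)^[n] := by
        rw [← Function.iterate_add]; congr 1; omega
    _ = (g i)^[k] := by rw [← congrFun h i, ← Function.iterate_add]; congr 1; omega

theorem DFA.evalFrom_replicate {α σ : Type*} (M : DFA α σ) (s : σ) (a : α) (n : ℕ) :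
    M.evalFrom s (List.replicate n a) = (M.step · a)^[n] s := by
  induction n generalizing s with
  | zero => rfl
  | succ n ih => rw [List.replicate_succ, DFA.evalFrom_cons, ih, Function.iterate_succ_apply]

theorem RegularRel.exists_isUltimatelyPeriodic {R : ℕ → ℕ → Prop} (hR : RegularRel R) :
    ∃ T P, 0 < T ∧ 0 < P ∧ IsUltimatelyPeriodic R T P := by
  obtain ⟨σ, _, M, hM⟩ := hR
  obtain ⟨N, P, hP, hper⟩ := Function.exists_iterate_add_eq fun (c : Fin 3) s => M.step s c
  have hword : ∀ k d (c : Fin 3), M.eval (List.replicate k 0 ++ List.replicate d c) =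
      (M.step · c)^[d] ((M.step · 0)^[k] M.start) := by
    intro k d c
    rw [DFA.eval, DFA.evalFrom_of_append, DFA.evalFrom_replicate, DFA.evalFrom_replicate]
  have hup : ∀ k d,
      R k (k + d) ↔ (M.step · 2)^[d] ((M.step · 0)^[k] M.start) ∈ M.accept := by
    intro k d
    rw [← convWord_mem_convLang (R := R), ← hM, DFA.mem_accepts, convWord_add_right, hword]
  have hdown : ∀ k d,
      R (k + d) k ↔ (M.step · 1)^[d] ((M.step · 0)^[k] M.start) ∈ M.accept := by
    intro k d
    rw [← convWord_mem_convLang (R := R), ← hM, DFA.mem_accepts, convWord_add_left, hword]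
  refine ⟨N + 1, P, by omega, hP, fun x y hx hy => ?_, fun k d hd => ?_, fun k d hd => ?_⟩
  · rcases le_total x y with hxy | hxy
    · obtain ⟨d, rfl⟩ := Nat.exists_eq_add_of_le hxy
      rw [add_right_comm, hup, hup, hper 0 x (by omega)]
    · obtain ⟨d, rfl⟩ := Nat.exists_eq_add_of_le hxy
      rw [add_right_comm, hdown, hdown, hper 0 y (by omega)]
  · rw [add_assoc, hup, hup, hper 2 d (by omega)]
  · rw [add_assoc, hdown, hdown, hper 1 d (by omega)]

theorem DFA.isRegular_accepts_of_map {α σ τ : Type*} [Finite τ] (M : DFA α σ) (f : σ → τ)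
    (hstep : ∀ s s' a, f s = f s' → f (M.step s a) = f (M.step s' a))
    (haccept : ∀ s s', f s = f s' → (s ∈ M.accept ↔ s' ∈ M.accept)) :
    M.accepts.IsRegular := by
  have hfactor : Function.FactorsThrough M.acceptsFrom f := by
    intro s s' hss'
    ext x
    induction x generalizing s s' with
    | nil => exact haccept s s' hss'
    | cons a x ih => exact ih (hstep s s' a hss')
  refine .of_finite_range_leftQuotient
    ((Set.finite_range (Function.extend f M.acceptsFrom ⊥)).subset ?_)
  rintro _ ⟨x, rfl⟩
  exact ⟨f (M.eval x), by rw [hfactor.extend_apply, Language.leftQuotient_accepts_apply]⟩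

section Counters

variable {T P n n' : ℕ}

def counterClass (T P n : ℕ) : Fin T ⊕ ZMod P := if h : n < T then .inl ⟨n, h⟩ else .inr n

theorem counterClass_eq_counterClass_iff :
    counterClass T P n = counterClass T P n' ↔
      n = n' ∨ T ≤ n ∧ T ≤ n' ∧ n ≡ n' [MOD P] := by
  unfold counterClass
  split_ifs with hn hn' hn'
  · simp only [Sum.inl.injEq, Fin.ext_iff]
    omega
  · simp only [false_iff]
    omega
  · simp only [false_iff]
    omega
  · rw [Sum.inr.injEq, ZMod.natCast_eq_natCast_iff]
    exact ⟨fun h => .inr ⟨by omega, by omega, h⟩, fun h => h.elim (· ▸ rfl) (·.2.2)⟩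

theorem counterClass_add_one (h : counterClass T P n = counterClass T P n') :
    counterClass T P (n + 1) = counterClass T P (n' + 1) := by
  rcases counterClass_eq_counterClass_iff.1 h with rfl | ⟨hn, hn', hmod⟩
  exacts [rfl, counterClass_eq_counterClass_iff.2 (.inr ⟨by omega, by omega, hmod.add_right 1⟩)]

theorem eq_zero_iff_of_counterClass_eq (hT : 0 < T)
    (h : counterClass T P n = counterClass T P n') : n = 0 ↔ n' = 0 := by
  rcases counterClass_eq_counterClass_iff.1 h with rfl | ⟨hn, hn', -⟩
  exacts [.rfl, by omega]

theorem iff_of_counterClass_eq_of_iff_add {p : ℕ → Prop}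
    (h : ∀ n, T ≤ n → (p n ↔ p (n + P)))
    (hcls : counterClass T P n = counterClass T P n') : p n ↔ p n' := by
  rcases counterClass_eq_counterClass_iff.1 hcls with rfl | ⟨hn, hn', hmod⟩
  exacts [.rfl, iff_of_modEq_of_iff_add h hn hn' hmod]

end Counters

def letter (u : Bool) : Fin 3 := bif u then 2 else 1

/-- After reading `sᵃ` followed by `b` copies of `r` (if `u`) or of `l` (if `¬u`), the automaton
is in state `some (a, b, u)`; every other word leads to the dead state `none`. -/
def convDFA (S : ℕ → ℕ → Prop) : DFA (Fin 3) (Option (ℕ × ℕ × Bool)) where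
  step
    | some (a, b, u), c =>
      if c = 0 then if b = 0 then some (a + 1, 0, u) else none
      else if b = 0 ∨ letter u = c then some (a, b + 1, c = 2) else none
    | none, _ => none
  start := some (0, 0, false)
  accept := {s | ∃ a b u, s = some (a, b, u) ∧ if u then S a (a + b) else S (a + b) a}

section ConvDFA

variable {S : ℕ → ℕ → Prop}

theorem convDFA_eval_eq_some {w : List (Fin 3)} {a b : ℕ} {u : Bool}
    (h : (convDFA S).eval w = some (a, b, u)) :
    w = List.replicate a 0 ++ List.replicate b (letter u) := by
  induction w using List.reverseRecOn generalizing a b u with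
  | nil =>
    simp [DFA.eval, DFA.evalFrom, convDFA] at h
    obtain ⟨rfl, rfl, -⟩ := h
    rfl
  | append_singleton w c ih =>
    rw [DFA.eval_append_singleton] at h
    rcases hw : (convDFA S).eval w with _ | ⟨a', b', u'⟩ <;> rw [hw] at h
    · simp [convDFA] at h
    · rw [ih hw]
      fin_cases c <;> cases u' <;> simp [convDFA, letter] at h ⊢
      all_goals grind [List.replicate_succ']

theorem convDFA_eval_replicate (a b : ℕ) (u : Bool) (hu : u → 0 < b) :
    (convDFA S).eval (List.replicate a 0 ++ List.replicate b (letter u)) = some (a, b, u) := by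
  have hzeros : ∀ a, (convDFA S).eval (List.replicate a 0) = some (a, 0, false) := by
    intro a
    induction a with
    | zero => rfl
    | succ a ih =>
      rw [List.replicate_succ', DFA.eval_append_singleton, ih]
      simp [convDFA]
  have hletters : ∀ b,
      (convDFA S).eval (List.replicate a 0 ++ List.replicate (b + 1) (letter u)) =
        some (a, b + 1, u) := by
    intro b
    induction b with
    | zero =>
      rw [zero_add, List.replicate_one, DFA.eval_append_singleton, hzeros]
      cases u <;> simp [convDFA, letter]
    | succ b ih =>
      rw [List.replicate_succ', ← List.append_assoc, DFA.eval_append_singleton, ih]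
      cases u <;> simp [convDFA, letter]
  rcases b with _ | b
  · cases u
    · simpa using hzeros a
    · simp at hu
  · exact hletters b

theorem accepts_convDFA : (convDFA S).accepts = convLang S := by
  ext w
  rw [DFA.mem_accepts]
  constructor
  · rintro ⟨a, b, u, hw, hS⟩
    rw [convDFA_eval_eq_some hw]
    cases u
    · exact ⟨a + b, a, hS, (convWord_add_left a b).symm⟩
    · exact ⟨a, a + b, hS, (convWord_add_right a b).symm⟩
  · rintro ⟨m, n, hS, rfl⟩
    rcases le_or_gt n m with h | h
    · obtain ⟨b, rfl⟩ := Nat.exists_eq_add_of_le h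
      refine ⟨n, b, false, ?_, hS⟩
      rw [convWord_add_left]
      exact convDFA_eval_replicate n b false (by simp)
    · obtain ⟨b, rfl⟩ := Nat.exists_eq_add_of_le h.le
      refine ⟨m, b, true, ?_, hS⟩
      rw [convWord_add_right]
      exact convDFA_eval_replicate m b true (by simp; omega)

end ConvDFA

theorem IsUltimatelyPeriodic.iff_of_counterClass_eq {S : ℕ → ℕ → Prop} {T P a a' b b' : ℕ}
    (hS : IsUltimatelyPeriodic S T P) (ha : counterClass T P a = counterClass T P a')
    (hb : counterClass T P b = counterClass T P b') :
    (S (a + b) a ↔ S (a' + b') a') ∧ (S a (a + b) ↔ S a' (a' + b')) := by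
  constructor
  · calc S (a + b) a ↔ S (a' + b) a' :=
        iff_of_counterClass_eq_of_iff_add (p := fun n => S (n + b) n)
          (fun n hn => by simpa [add_right_comm] using hS.diag (n + b) n (by omega) hn) ha
      _ ↔ S (a' + b') a' := iff_of_counterClass_eq_of_iff_add (p := fun n => S (a' + n) a')
          (fun n hn => by simpa [add_assoc] using hS.down a' n hn) hb
  · calc S a (a + b) ↔ S a' (a' + b) :=
        iff_of_counterClass_eq_of_iff_add (p := fun n => S n (n + b))
          (fun n hn => by simpa [add_right_comm] using hS.diag n (n + b) hn (by omega)) ha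
      _ ↔ S a' (a' + b') := iff_of_counterClass_eq_of_iff_add (p := fun n => S a' (a' + n))
          (fun n hn => by simpa [add_assoc] using hS.up a' n hn) hb

theorem IsUltimatelyPeriodic.regularRel {S : ℕ → ℕ → Prop} {T P : ℕ}
    (hS : IsUltimatelyPeriodic S T P) (hT : 0 < T) (hP : 0 < P) : RegularRel S := by
  have : NeZero P := ⟨hP.ne'⟩
  rw [RegularRel, ← accepts_convDFA]
  refine (convDFA S).isRegular_accepts_of_map
    (Option.map fun s => (counterClass T P s.1, counterClass T P s.2.1, s.2.2)) ?_ ?_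
  · rintro (_ | ⟨a, b, u⟩) (_ | ⟨a', b', u'⟩) c h <;> simp at h
    · rfl
    · obtain ⟨ha, hb, rfl⟩ := h
      have := counterClass_add_one ha
      have := counterClass_add_one hb
      have := eq_zero_iff_of_counterClass_eq hT hb
      simp only [convDFA]
      split_ifs <;> simp_all
  · rintro (_ | ⟨a, b, u⟩) (_ | ⟨a', b', u'⟩) h <;> simp at h
    · rfl
    · obtain ⟨ha, hb, rfl⟩ := h
      have := hS.iff_of_counterClass_eq ha hb
      cases u <;> simp [convDFA, this]

def LandsAbove (R : ℕ → ℕ → Prop) (c x y : ℕ) : Prop := R x y ∧ c ≤ y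

namespace Relation.ReflTransGen

theorem and_or_exists_not {α : Type*} {r q : α → α → Prop} {a b : α}
    (h : ReflTransGen r a b) :
    ReflTransGen (fun x y => r x y ∧ q x y) a b ∨
      ∃ u z, ReflTransGen r a u ∧ r u z ∧ ¬ q u z ∧ ReflTransGen r z b := by
  induction h with
  | refl => exact .inl .refl
  | @tail u z hau huz ih =>
    by_cases hq : q u z
    · rcases ih with h | ⟨u', z', hau', hu'z', hq', hz'u⟩
      · exact .inl (h.tail ⟨huz, hq⟩)
      · exact .inr ⟨u', z', hau', hu'z', hq', hz'u.tail huz⟩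
    · exact .inr ⟨u, z, hau, huz, hq, .refl⟩

variable {r R : ℕ → ℕ → Prop} {a b c w v l T P : ℕ}

theorem landsAbove_or_exists_lt (h : ReflTransGen R a b) (c : ℕ) :
    ReflTransGen (LandsAbove R c) a b ∨
      ∃ z < c, ReflTransGen R a z ∧ ReflTransGen (LandsAbove R c) z b := by
  induction h with
  | refl => exact .inl .refl
  | @tail u z hau huz ih =>
    by_cases hz : c ≤ z
    · rcases ih with h | ⟨z', hz', haz', hz'u⟩
      · exact .inl (h.tail ⟨huz, hz⟩)
      · exact .inr ⟨z', hz', haz', hz'u.tail ⟨huz, hz⟩⟩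
    · exact .inr ⟨z, by omega, hau.tail huz, .refl⟩

theorem le_of_landsAbove (h : ReflTransGen (LandsAbove R c) a b) (ha : c ≤ a) : c ≤ b := by
  rcases h.cases_tail with rfl | ⟨_, _, _, hb⟩
  exacts [ha, hb]

theorem lift_landsAbove {R' : ℕ → ℕ → Prop} (f : ℕ → ℕ)
    (hf : ∀ x y, c ≤ x → c ≤ y → R x y → R' (f x) (f y))
    (h : ReflTransGen (LandsAbove R c) a b) (ha : c ≤ a) : ReflTransGen R' (f a) (f b) := by
  induction h with
  | refl => exact .refl
  | tail hau hub ih => exact ih.tail (hf _ _ (hau.le_of_landsAbove ha) hub.2 hub.1)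

theorem landsAbove_add (hR : IsUltimatelyPeriodic R T P) (hc : T ≤ c)
    (h : ReflTransGen (LandsAbove R c) a b) (ha : c ≤ a) :
    ReflTransGen (LandsAbove R c) (a + P) (b + P) :=
  h.lift_landsAbove (· + P)
    (fun x y hx hy hxy => ⟨(hR.diag x y (hc.trans hx) (hc.trans hy)).1 hxy, by omega⟩) ha

theorem of_landsAbove_add (hR : IsUltimatelyPeriodic R T P)
    (h : ReflTransGen (LandsAbove R (T + P)) (a + P) (b + P)) (ha : T ≤ a) :
    ReflTransGen R a b := by
  simpa using h.lift_landsAbove (R' := R) (· - P) (fun x y hx hy hxy =>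
    (hR.diag (x - P) (y - P) (by omega) (by omega)).2
      (by rwa [Nat.sub_add_cancel (by omega), Nat.sub_add_cancel (by omega)])) (by omega)

theorem exists_mem_Ico (hr : ∀ x y, r x y → y < x + T) (h : ReflTransGen r w v)
    (hw : w < l) (hv : l ≤ v) :
    ∃ u, l ≤ u ∧ u < l + T ∧ ReflTransGen r w u ∧ ReflTransGen r u v := by
  induction h with
  | refl => omega
  | @tail u z hwu huz ih =>
    by_cases hu : l ≤ u
    · obtain ⟨u', hlu', hu'l, hwu', hu'u⟩ := ih hu
      exact ⟨u', hlu', hu'l, hwu', hu'u.tail huz⟩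
    · exact ⟨z, hv, by have := hr _ _ huz; omega, hwu.tail huz, .refl⟩

theorem exists_ladder (hr : ∀ x y, r x y → y < x + T) (h : ReflTransGen r w v) (hw : w < l)
    (n : ℕ) (hv : l + n * T ≤ v) :
    ∃ f : ℕ → ℕ, (∀ i ≤ n, l + i * T ≤ f i ∧ f i < l + i * T + T) ∧
      (∀ i j, i ≤ j → j ≤ n → ReflTransGen r (f i) (f j)) ∧
      ReflTransGen r w (f 0) ∧ ReflTransGen r (f n) v := by
  induction n generalizing w l with
  | zero =>
    obtain ⟨u, hlu, hul, hwu, huv⟩ := h.exists_mem_Ico hr hw (by simpa using hv)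
    exact ⟨fun _ => u, fun i hi => by simp_all, fun _ _ _ _ => .refl, hwu, huv⟩
  | succ n ih =>
    obtain ⟨u, hlu, hul, hwu, huv⟩ := h.exists_mem_Ico hr hw (by rw [add_one_mul] at hv; omega)
    obtain ⟨f, hf, hchain, hu0, hfv⟩ :=
      ih huv (l := l + T) hul (by rw [add_one_mul] at hv; omega)
    refine ⟨fun | 0 => u | i + 1 => f i, ?_, ?_, hwu, hfv⟩
    · rintro (_ | i) hi
      · simpa using ⟨hlu, hul⟩
      · have := hf i (by omega)
        simp only [add_one_mul]
        omega
    · rintro (_ | i) (_ | j) hij hj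
      · exact .refl
      · exact hu0.trans (hchain 0 j (by omega) (by omega))
      · omega
      · exact hchain i j (by omega) (by omega)

theorem exists_climb (hr : ∀ x y, r x y → y < x + T) (hP : 0 < P) (h : ReflTransGen r w v)
    (hw : w < l) (hv : l + P * T ≤ v) :
    ∃ a b, l ≤ a ∧ a < b ∧ b < a + (P + 1) * T ∧ P ∣ b - a ∧
      ReflTransGen r w a ∧ ReflTransGen r a b ∧ ReflTransGen r b v := by
  obtain ⟨f, hf, hchain, hw0, hfv⟩ := h.exists_ladder hr hw P hv
  obtain ⟨i, hi, j, hj, hij, hmod⟩ := Finset.exists_ne_map_eq_of_card_lt_of_maps_to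
    (s := Finset.range (P + 1)) (t := Finset.range P) (f := fun i => f i % P) (by simp)
    (fun i _ => by simpa using Nat.mod_lt _ hP)
  wlog hlt : i < j generalizing i j
  · exact this j hj i hi hij.symm hmod.symm (by omega)
  simp only [Finset.mem_range] at hi hj
  obtain ⟨hfi, hfi'⟩ := hf i (by omega)
  obtain ⟨hfj, hfj'⟩ := hf j (by omega)
  have hij' : (i + 1) * T ≤ j * T := Nat.mul_le_mul_right _ hlt
  have hjP : (j + 1) * T ≤ (P + 1) * T := Nat.mul_le_mul_right _ (by omega)
  simp only [add_one_mul] at hij' hjP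
  refine ⟨f i, f j, by omega, by omega, by rw [add_one_mul]; omega,
    (Nat.modEq_iff_dvd' (by omega)).1 hmod, hw0.trans (hchain 0 i (by omega) (by omega)),
    hchain i j (by omega) (by omega), (hchain j P (by omega) le_rfl).trans hfv⟩

end Relation.ReflTransGen

theorem exists_up_of_diag {S : ℕ → ℕ → Prop} {K Q : ℕ} (hQ : 0 < Q)
    (hdiag : ∀ x y, K ≤ x → K ≤ y → (S x y ↔ S (x + Q) (y + Q)))
    (hup : ∀ k, ∀ᶠ v in atTop, S k v ↔ S k (v + Q)) :
    ∃ T, ∀ k d, T ≤ d → (S k (k + d) ↔ S k (k + d + Q)) := by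
  obtain ⟨T, hT⟩ := eventually_atTop.1
    ((eventually_all_finite (Set.finite_lt_nat (K + Q))).2 fun k _ => hup k)
  refine ⟨T, fun k d hd => ?_⟩
  induction k using Nat.strong_induction_on with
  | _ k ih =>
    by_cases hk : k < K + Q
    · exact hT (k + d) (by omega) k hk
    · obtain ⟨k, rfl⟩ : ∃ k₀, k = k₀ + Q := ⟨k - Q, by omega⟩
      rw [add_right_comm k Q d, ← hdiag k (k + d) (by omega) (by omega),
        ← hdiag k (k + d + Q) (by omega) (by omega)]
      exact ih k (by omega)

namespace IsUltimatelyPeriodic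

variable {R : ℕ → ℕ → Prop} {T P Q k v x y N : ℕ}

theorem reflTransGen_add_factorial (hR : IsUltimatelyPeriodic R T P) (hT : 0 < T) (hP : 0 < P)
    (hv : max k T + 1 + P * T ≤ v) (h : ReflTransGen R k v) :
    ReflTransGen R k (v + ((P + 1) * T)!) := by
  set Q := ((P + 1) * T)!
  set c := max k T + 1
  have hTc : T ≤ c := by omega
  have toR : ∀ {a b}, ReflTransGen (LandsAbove R c) a b → ReflTransGen R a b :=
    fun h => ReflTransGen.mono (fun _ _ h => h.1) _ _ h
  obtain ⟨w, hwc, hkw, hwv⟩ :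
      ∃ w < c, ReflTransGen R k w ∧ ReflTransGen (LandsAbove R c) w v := by
    rcases h.landsAbove_or_exists_lt c with h | h
    exacts [⟨k, by omega, .refl, h⟩, h]
  rcases hwv.and_or_exists_not (q := fun x y => y < x + T) with
    hshort | ⟨u, z, hwu, ⟨huz, hcz⟩, hlong, hzv⟩
  · obtain ⟨a, b, hca, hab, hba, hPD, hwa, hab', hbv⟩ :=
      hshort.exists_climb (fun _ _ h => h.2) hP hwc hv
    have toA : ∀ {a b}, ReflTransGen (fun x y => LandsAbove R c x y ∧ y < x + T) a b →
        ReflTransGen (LandsAbove R c) a b := fun h => ReflTransGen.mono (fun _ _ h => h.1) _ _ h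
    obtain ⟨m, hm⟩ : b - a ∣ Q :=
      Nat.dvd_factorial (by omega) (by rw [add_one_mul] at hba ⊢; omega)
    have hrepeat : ∀ j, ReflTransGen (LandsAbove R c) a (a + (b - a) * j) := by
      intro j
      induction j with
      | zero => exact .refl
      | succ j ih =>
        have := (toA hab').landsAbove_add (hR.of_dvd (hPD.mul_right j)) hTc hca
        rw [show b + (b - a) * j = a + (b - a) * (j + 1) by rw [mul_add_one]; omega] at this
        exact ih.trans this
    exact (hkw.trans (toR (toA hwa))).trans (toR ((hm ▸ hrepeat m).trans
      ((toA (hab'.trans hbv)).landsAbove_add (hR.of_dvd (hPD.trans ⟨m, hm⟩)) hTc hca)))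
  · have hQ : P ∣ Q := Nat.dvd_factorial hP (by nlinarith)
    have huzQ : R u (z + Q) := by
      simpa [Nat.add_sub_cancel' (show u ≤ z by omega)] using
        ((hR.of_dvd hQ).up u (z - u) (by omega)).1 (by rwa [Nat.add_sub_cancel' (by omega)])
    exact ((hkw.trans (toR hwu)).tail huzQ).trans (toR (hzv.landsAbove_add (hR.of_dvd hQ) hTc hcz))

theorem reflTransGen_add_iff (hR : IsUltimatelyPeriodic R T Q)
    (hN : ∀ v, N ≤ v → ∀ z < T + Q, (ReflTransGen R z v ↔ ReflTransGen R z (v + Q)) ∧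
      (ReflTransGen R v z ↔ ReflTransGen R (v + Q) z))
    (hx : N ≤ x) (hy : N ≤ y) (hTx : T + Q ≤ x) :
    ReflTransGen R x y ↔ ReflTransGen R (x + Q) (y + Q) := by
  have toR : ∀ {a b}, ReflTransGen (LandsAbove R (T + Q)) a b → ReflTransGen R a b :=
    fun h => ReflTransGen.mono (fun _ _ h => h.1) _ _ h
  constructor
  · intro h
    rcases h.landsAbove_or_exists_lt (T + Q) with h | ⟨z, hz, hxz, hzy⟩
    · exact toR (h.landsAbove_add hR (by omega) hTx)
    · exact ((hN x hx z hz).2.1 hxz).trans ((hN y hy z hz).1.1 (toR hzy))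
  · intro h
    rcases h.landsAbove_or_exists_lt (T + Q) with h | ⟨z, hz, hxz, hzy⟩
    · exact h.of_landsAbove_add hR (by omega)
    · exact ((hN x hx z hz).2.2 hxz).trans ((hN y hy z hz).1.2 (toR hzy))

theorem reflTransGen (hR : IsUltimatelyPeriodic R T P) (hT : 0 < T) (hP : 0 < P) :
    ∃ T' Q, 0 < T' ∧ 0 < Q ∧ IsUltimatelyPeriodic (ReflTransGen R) T' Q := by
  set Q := ((P + 1) * T)!
  have hQ : 0 < Q := Nat.factorial_pos _
  have hpump : ∀ {R'} k, IsUltimatelyPeriodic R' T P →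
      ∀ᶠ v in atTop, ReflTransGen R' k v ↔ ReflTransGen R' k (v + Q) := fun k hR' =>
    eventually_iff_add_of_eventually_imp hQ
      ((eventually_ge_atTop _).mono fun _ hv => hR'.reflTransGen_add_factorial hT hP hv)
  have hup := fun k => hpump k hR
  have hdown : ∀ k, ∀ᶠ v in atTop, ReflTransGen R v k ↔ ReflTransGen R (v + Q) k :=
    fun k => by simpa only [reflTransGen_swap] using hpump k hR.swap
  obtain ⟨N, hN⟩ := eventually_atTop.1
    ((eventually_all_finite (Set.finite_lt_nat (T + Q))).2 fun z _ => (hup z).and (hdown z))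
  have hdiag : ∀ x y, N + T + Q ≤ x → N + T + Q ≤ y →
      (ReflTransGen R x y ↔ ReflTransGen R (x + Q) (y + Q)) := fun x y hx hy =>
    (hR.of_dvd (Nat.dvd_factorial hP (by nlinarith))).reflTransGen_add_iff hN
      (by omega) (by omega) (by omega)
  obtain ⟨T₁, h₁⟩ := exists_up_of_diag hQ hdiag hup
  obtain ⟨T₂, h₂⟩ := exists_up_of_diag (S := Function.swap (ReflTransGen R)) hQ
    (fun x y hx hy => hdiag y x hy hx) hdown
  exact ⟨N + T + Q + T₁ + T₂ + 1, Q, by omega, hQ,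
    ⟨fun x y hx hy => hdiag x y (by omega) (by omega), fun k d hd => h₁ k d (by omega),
      fun k d hd => h₂ k d (by omega)⟩⟩

end IsUltimatelyPeriodic

theorem regularRel_iff_exists_isUltimatelyPeriodic {R : ℕ → ℕ → Prop} :
    RegularRel R ↔ ∃ T P, 0 < T ∧ 0 < P ∧ IsUltimatelyPeriodic R T P :=
  ⟨RegularRel.exists_isUltimatelyPeriodic, fun ⟨_, _, hT, hP, h⟩ => h.regularRel hT hP⟩

theorem stmt2 (R : ℕ → ℕ → Prop) (hR : RegularRel R) :
    RegularRel (Relation.ReflTransGen R) := by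
  obtain ⟨T, P, hT, hP, h⟩ := regularRel_iff_exists_isUltimatelyPeriodic.1 hR
  exact regularRel_iff_exists_isUltimatelyPeriodic.2 (h.reflTransGen hT hP)
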